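/- (Bernoulli sampling upper bound for p-way join size.) Let p ≥ 2 and n be positive integers, let V be a finite type with |V| ≤ p·n, let E be a nonempty Finset of Finsets of V with every e ∈ E of cardinality p and with every vertex degree d_v ≤ n^{p−1}. Let (ξ_v)_{v ∈ V} be independent random variables on a probability space, each taking values in {0, 1} with P(ξ_v = 1) = q, where 1/(p·n) ≤ q ≤ 1, and let X := Σ_{e ∈ E} Π_{v ∈ e} ξ_v. Then Var(X) ≤ 2p·|E|·n^{p−1}·q^{p+1}, and consequently for every θ > 0, P(|q^{−p}·X − |E|| ≥ θ·|E|) ≤ 2p·n^{p−1}/(θ²·|E|·q^{p−1}). -/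

import Mathlib

/-!
Write `X = ∑_{e ∈ E} ∏_{v ∈ e} ξ_v`. The `ξ_v` are idempotent, so the product of the monomials
of `e` and `f` is the monomial of `e ∪ f`, and independence gives `E[X²] = ∑_{e,f} q^{|e ∪ f|}`
and `E[X] = |E| q^p`. In the variance, disjoint pairs cancel, the diagonal contributes
`q^p ≤ p n^{p-1} q^{p+1}` per edge (as `q ≥ 1/(pn)`), and by the degree bound at most
`p n^{p-1}` edges meet a given edge `e`, each `f ≠ e` with `|e ∪ f| ≥ p + 1`. Chebyshev's
inequality for `q^{-p} X` then gives the tail bound.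
-/

open MeasureTheory ProbabilityTheory Finset

theorem Finset.prod_mul_prod_eq_prod_union_of_isIdempotentElem {ι M : Type*} [DecidableEq ι]
    [CommMonoid M] {x : ι → M} {s t : Finset ι} (hx : ∀ i ∈ s ∩ t, IsIdempotentElem (x i)) :
    (∏ i ∈ s, x i) * ∏ i ∈ t, x i = ∏ i ∈ s ∪ t, x i := by
  have hinter : IsIdempotentElem (∏ i ∈ s ∩ t, x i) := by
    rw [IsIdempotentElem, ← prod_mul_distrib]
    exact prod_congr rfl hx
  rw [← prod_union_inter, ← prod_sdiff (inter_subset_union (s := s) (t := t)), mul_assoc,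
    hinter.eq]

theorem Finset.card_lt_card_union_of_ne {α : Type*} [DecidableEq α] {s t : Finset α}
    (hst : s ≠ t) (hcard : #s = #t) : #s < #(s ∪ t) := by
  refine card_lt_card (ssubset_iff_subset_ne.mpr ⟨subset_union_left, fun h => hst ?_⟩)
  exact (eq_of_subset_of_card_le (subset_union_right.trans h.ge) hcard.le).symm

theorem Finset.card_filter_inter_nonempty_le_sum_card_filter_mem {α : Type*} [DecidableEq α]
    (E : Finset (Finset α)) (e : Finset α) :
    #{f ∈ E | (e ∩ f).Nonempty} ≤ ∑ v ∈ e, #{f ∈ E | v ∈ f} := by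
  refine (card_le_card fun f hf => ?_).trans card_biUnion_le
  obtain ⟨hfE, v, hv⟩ := mem_filter.mp hf
  rw [mem_inter] at hv
  exact mem_biUnion.mpr ⟨v, hv.1, mem_filter.mpr ⟨hfE, hv.2⟩⟩

section UniformHypergraph

variable {V : Type*} [DecidableEq V] {E : Finset (Finset V)} {p D : ℕ} {q : ℝ}

theorem pow_card_union_sub_le (hq0 : 0 ≤ q) (hq1 : q ≤ 1) {e f : Finset V} (he : #e = p)
    (hf : #f = p) :
    q ^ #(e ∪ f) - q ^ p * q ^ p ≤
      (if e = f then q ^ p else 0) + if (e ∩ f).Nonempty then q ^ (p + 1) else 0 := by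
  by_cases hef : e = f
  · subst hef
    simp only [union_self, he, if_true]
    split_ifs <;> nlinarith [pow_nonneg hq0 p, pow_nonneg hq0 (p + 1)]
  by_cases hint : (e ∩ f).Nonempty
  · have hcard : p + 1 ≤ #(e ∪ f) := he ▸ card_lt_card_union_of_ne hef (he.trans hf.symm)
    simp only [hef, hint, if_true, if_false, zero_add]
    nlinarith [pow_nonneg hq0 p, pow_le_pow_of_le_one hq0 hq1 hcard]
  · have hdisj : Disjoint e f := not_not.mp (mt not_disjoint_iff_nonempty_inter.mp hint)
    simp [hef, hint, card_union_of_disjoint hdisj, he, hf, pow_add]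

theorem sum_pow_card_union_sub_le (hq0 : 0 ≤ q) (hq1 : q ≤ 1) (hE : ∀ e ∈ E, #e = p)
    (hdeg : ∀ v, #{f ∈ E | v ∈ f} ≤ D) {e : Finset V} (he : e ∈ E) :
    ∑ f ∈ E, (q ^ #(e ∪ f) - q ^ p * q ^ p) ≤ q ^ p + p * D * q ^ (p + 1) := by
  have hcount : #{f ∈ E | (e ∩ f).Nonempty} ≤ p * D :=
    (card_filter_inter_nonempty_le_sum_card_filter_mem E e).trans <| by
      simpa [hE e he] using sum_le_sum fun v (_ : v ∈ e) => hdeg v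
  calc ∑ f ∈ E, (q ^ #(e ∪ f) - q ^ p * q ^ p)
      ≤ ∑ f ∈ E, ((if e = f then q ^ p else 0) + if (e ∩ f).Nonempty then q ^ (p + 1) else 0) :=
        sum_le_sum fun f hf => pow_card_union_sub_le hq0 hq1 (hE e he) (hE f hf)
    _ = q ^ p + #{f ∈ E | (e ∩ f).Nonempty} * q ^ (p + 1) := by
        rw [sum_add_distrib, sum_ite_eq, if_pos he, ← sum_filter, sum_const, nsmul_eq_mul]
    _ ≤ q ^ p + p * D * q ^ (p + 1) := by
        gcongr
        exact_mod_cast hcount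

theorem sum_sum_pow_card_union_sub_le (hq0 : 0 ≤ q) (hq1 : q ≤ 1) (hE : ∀ e ∈ E, #e = p)
    (hdeg : ∀ v, #{f ∈ E | v ∈ f} ≤ D) (hqD : 1 ≤ p * D * q) :
    ∑ e ∈ E, ∑ f ∈ E, (q ^ #(e ∪ f) - q ^ p * q ^ p) ≤ 2 * p * #E * D * q ^ (p + 1) := by
  have hdiag : q ^ p ≤ p * D * q ^ (p + 1) := by
    rw [pow_succ]
    nlinarith [pow_nonneg hq0 p]
  calc ∑ e ∈ E, ∑ f ∈ E, (q ^ #(e ∪ f) - q ^ p * q ^ p)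
      ≤ ∑ _e ∈ E, 2 * p * D * q ^ (p + 1) := sum_le_sum fun e he =>
        (sum_pow_card_union_sub_le hq0 hq1 hE hdeg he).trans (by linarith)
    _ = 2 * p * #E * D * q ^ (p + 1) := by
        rw [sum_const, nsmul_eq_mul]
        ring

end UniformHypergraph

section BernoulliSampling

variable {Ω V : Type*} [MeasurableSpace Ω] {μ : Measure Ω}

theorem integral_eq_measureReal_of_eq_zero_or_one {X : Ω → ℝ} (hX : Measurable X)
    (h01 : ∀ ω, X ω = 0 ∨ X ω = 1) : ∫ ω, X ω ∂μ = μ.real {ω | X ω = 1} := by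
  have hset : MeasurableSet {ω | X ω = 1} := hX (measurableSet_singleton 1)
  rw [← integral_indicator_one hset]
  refine integral_congr_ae (ae_of_all _ fun ω => ?_)
  rcases h01 ω with h | h <;> simp [h]

variable {ξ : V → Ω → ℝ}

theorem ProbabilityTheory.iIndepFun.integral_finset_prod_eq_pow (hindep : iIndepFun ξ μ)
    (hmeas : ∀ v, Measurable (ξ v)) {q : ℝ} (hmean : ∀ v, ∫ ω, ξ v ω ∂μ = q) (s : Finset V) :
    ∫ ω, ∏ v ∈ s, ξ v ω ∂μ = q ^ #s := by
  have hs : iIndepFun (fun v : s => ξ v) μ := hindep.precomp Subtype.val_injective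
  simp_rw [← prod_coe_sort s]
  rw [hs.integral_fun_prod_eq_prod_integral fun v => (hmeas v).aestronglyMeasurable]
  simp [hmean]

theorem memLp_finset_prod_of_eq_zero_or_one [IsFiniteMeasure μ] (hmeas : ∀ v, Measurable (ξ v))
    (h01 : ∀ v ω, ξ v ω = 0 ∨ ξ v ω = 1) (s : Finset V) (r : ENNReal) :
    MemLp (fun ω => ∏ v ∈ s, ξ v ω) r μ := by
  refine MemLp.of_bound (measurable_prod s fun v _ => hmeas v).aestronglyMeasurable 1
    (ae_of_all _ fun ω => ?_)
  rw [norm_prod]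
  exact prod_le_one (fun v _ => norm_nonneg _) fun v _ => by
    rcases h01 v ω with h | h <;> simp [h]

theorem integral_sum_prod_eq_card_mul_pow (hindep : iIndepFun ξ μ)
    (hmeas : ∀ v, Measurable (ξ v)) (h01 : ∀ v ω, ξ v ω = 0 ∨ ξ v ω = 1) {q : ℝ}
    (hmean : ∀ v, ∫ ω, ξ v ω ∂μ = q) {E : Finset (Finset V)} {p : ℕ} (hE : ∀ e ∈ E, #e = p) :
    ∫ ω, ∑ e ∈ E, ∏ v ∈ e, ξ v ω ∂μ = #E * q ^ p := by
  have := hindep.isProbabilityMeasure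
  rw [integral_finsetSum _ fun e _ =>
    (memLp_finset_prod_of_eq_zero_or_one hmeas h01 e 1).integrable le_rfl,
    sum_congr rfl fun e he => by rw [hindep.integral_finset_prod_eq_pow hmeas hmean e, hE e he],
    sum_const, nsmul_eq_mul]

theorem integral_sq_sum_prod_eq [DecidableEq V] (hindep : iIndepFun ξ μ)
    (hmeas : ∀ v, Measurable (ξ v)) (h01 : ∀ v ω, ξ v ω = 0 ∨ ξ v ω = 1) {q : ℝ}
    (hmean : ∀ v, ∫ ω, ξ v ω ∂μ = q) (E : Finset (Finset V)) :
    ∫ ω, (∑ e ∈ E, ∏ v ∈ e, ξ v ω) ^ 2 ∂μ = ∑ e ∈ E, ∑ f ∈ E, q ^ #(e ∪ f) := by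
  have := hindep.isProbabilityMeasure
  have hsq : ∀ ω, (∑ e ∈ E, ∏ v ∈ e, ξ v ω) ^ 2 = ∑ e ∈ E, ∑ f ∈ E, ∏ v ∈ e ∪ f, ξ v ω :=
    fun ω => by
      rw [sq, sum_mul_sum]
      exact sum_congr rfl fun e _ => sum_congr rfl fun f _ =>
        prod_mul_prod_eq_prod_union_of_isIdempotentElem fun v _ => by
          rcases h01 v ω with h | h <;> simp [h, IsIdempotentElem]
  have hint : ∀ s : Finset V, Integrable (fun ω => ∏ v ∈ s, ξ v ω) μ := fun s =>
    (memLp_finset_prod_of_eq_zero_or_one hmeas h01 s 1).integrable le_rfl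
  simp_rw [hsq]
  rw [integral_finsetSum _ fun e _ => integrable_finsetSum _ fun f _ => hint (e ∪ f)]
  refine sum_congr rfl fun e _ => ?_
  rw [integral_finsetSum _ fun f _ => hint (e ∪ f)]
  exact sum_congr rfl fun f _ => hindep.integral_finset_prod_eq_pow hmeas hmean (e ∪ f)

theorem integral_sq_sub_sq_integral_sum_prod_le [DecidableEq V] (hindep : iIndepFun ξ μ)
    (hmeas : ∀ v, Measurable (ξ v)) (h01 : ∀ v ω, ξ v ω = 0 ∨ ξ v ω = 1) {q : ℝ}
    (hq0 : 0 ≤ q) (hq1 : q ≤ 1) (hmean : ∀ v, ∫ ω, ξ v ω ∂μ = q) {E : Finset (Finset V)}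
    {p D : ℕ} (hE : ∀ e ∈ E, #e = p) (hdeg : ∀ v, #{f ∈ E | v ∈ f} ≤ D)
    (hqD : 1 ≤ p * D * q) :
    (∫ ω, (∑ e ∈ E, ∏ v ∈ e, ξ v ω) ^ 2 ∂μ) - (∫ ω, ∑ e ∈ E, ∏ v ∈ e, ξ v ω ∂μ) ^ 2
      ≤ 2 * p * #E * D * q ^ (p + 1) := by
  rw [integral_sq_sum_prod_eq hindep hmeas h01 hmean,
    integral_sum_prod_eq_card_mul_pow hindep hmeas h01 hmean hE]
  calc ∑ e ∈ E, ∑ f ∈ E, q ^ #(e ∪ f) - (#E * q ^ p) ^ 2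
      = ∑ e ∈ E, ∑ f ∈ E, (q ^ #(e ∪ f) - q ^ p * q ^ p) := by
        simp only [sum_sub_distrib, sum_const, nsmul_eq_mul]
        ring
    _ ≤ 2 * p * #E * D * q ^ (p + 1) := sum_sum_pow_card_union_sub_le hq0 hq1 hE hdeg hqD

theorem measureReal_abs_div_sub_ge_le_variance_div_sq [IsFiniteMeasure μ] {X : Ω → ℝ}
    (hX : MemLp X 2 μ) {c t : ℝ} (hc : 0 < c) (ht : 0 < t) :
    μ.real {ω | t ≤ |X ω / c - μ[X] / c|} ≤ variance X μ / (t * c) ^ 2 := by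
  have hset : {ω | t ≤ |X ω / c - μ[X] / c|} = {ω | t * c ≤ |X ω - μ[X]|} := by
    ext ω
    rw [Set.mem_ofPred_eq, Set.mem_ofPred_eq, ← sub_div, abs_div, abs_of_pos hc, le_div_iff₀ hc]
  rw [hset, measureReal_def]
  exact ENNReal.toReal_le_of_le_ofReal (div_nonneg (variance_nonneg _ _) (sq_nonneg _))
    (meas_ge_le_variance_div_sq hX (mul_pos ht hc))

end BernoulliSampling

theorem stmt19_general {V : Type*} [DecidableEq V] {Ω : Type*}
    [MeasurableSpace Ω] (μ : Measure Ω) [IsProbabilityMeasure μ]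
    (p n : ℕ) (hp : 2 ≤ p) (hn : 0 < n)
    (E : Finset (Finset V)) (hEne : E.Nonempty) (hE : ∀ e ∈ E, e.card = p)
    (hdeg : ∀ v : V, (E.filter (fun e => v ∈ e)).card ≤ n ^ (p - 1))
    (ξ : V → Ω → ℝ) (hmeas : ∀ v, Measurable (ξ v))
    (hindep : iIndepFun ξ μ)
    (hval : ∀ v ω, ξ v ω = 0 ∨ ξ v ω = 1)
    (q : ℝ) (hqlb : 1 / ((p : ℝ) * n) ≤ q) (hq1 : q ≤ 1)
    (hq : ∀ v, μ {ω | ξ v ω = 1} = ENNReal.ofReal q) :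
    ((∫ ω, (∑ e ∈ E, ∏ v ∈ e, ξ v ω) ^ 2 ∂μ)
        - (∫ ω, ∑ e ∈ E, ∏ v ∈ e, ξ v ω ∂μ) ^ 2
      ≤ 2 * (p : ℝ) * E.card * (n : ℝ) ^ (p - 1) * q ^ (p + 1)) ∧
    ∀ θ : ℝ, 0 < θ →
      (μ {ω | θ * (E.card : ℝ) ≤
          |(∑ e ∈ E, ∏ v ∈ e, ξ v ω) / q ^ p - (E.card : ℝ)|}).toReal
        ≤ 2 * (p : ℝ) * (n : ℝ) ^ (p - 1) / (θ ^ 2 * E.card * q ^ (p - 1)) := by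
  have hq0 : 0 < q := lt_of_lt_of_le (by positivity) hqlb
  have hmean v : ∫ ω, ξ v ω ∂μ = q := by
    rw [integral_eq_measureReal_of_eq_zero_or_one (hmeas v) (hval v), measureReal_def, hq v,
      ENNReal.toReal_ofReal hq0.le]
  have hqD : 1 ≤ p * (n ^ (p - 1) : ℕ) * q := by
    rw [div_le_iff₀ (by positivity)] at hqlb
    push_cast
    calc (1 : ℝ) ≤ p * n * q := by linarith
      _ ≤ p * n ^ (p - 1) * q := by gcongr; exact_mod_cast Nat.le_self_pow (by omega) n
  have hvar := integral_sq_sub_sq_integral_sum_prod_le hindep hmeas hval hq0.le hq1 hmean hE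
    hdeg hqD
  push_cast at hvar
  refine ⟨hvar, fun θ hθ => ?_⟩
  have hX : MemLp (fun ω => ∑ e ∈ E, ∏ v ∈ e, ξ v ω) 2 μ := by
    simpa only [← sum_fn] using
      memLp_finsetSum' E fun e _ => memLp_finset_prod_of_eq_zero_or_one hmeas hval e 2
  have hcheb := measureReal_abs_div_sub_ge_le_variance_div_sq hX (pow_pos hq0 p)
    (mul_pos hθ (by exact_mod_cast hEne.card_pos : (0 : ℝ) < #E))
  rw [integral_sum_prod_eq_card_mul_pow hindep hmeas hval hmean hE,
    mul_div_cancel_right₀ _ (pow_pos hq0 p).ne', variance_eq_sub hX] at hcheb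
  calc _ ≤ _ := hcheb
    _ ≤ 2 * p * #E * n ^ (p - 1) * q ^ (p + 1) / (θ * #E * q ^ p) ^ 2 := by gcongr; exact hvar
    _ = 2 * (p : ℝ) * (n : ℝ) ^ (p - 1) / (θ ^ 2 * E.card * q ^ (p - 1)) := by
      obtain ⟨k, rfl⟩ : ∃ k, p = k + 1 := ⟨p - 1, by omega⟩
      rw [Nat.add_sub_cancel]
      field_simp
      ring

/-- Bernoulli sampling upper bound for `p`-way join size, encoded as a
`p`-uniform hypergraph with at most `p·n` vertices and degrees at most `n^{p−1}`:
for Bernoulli vertex-sampling probability `q ≥ 1/(pn)`, the edge-count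
`X = Σ_{e ∈ E} Π_{v ∈ e} ξ_v` satisfies `Var(X) ≤ 2p·|E|·n^{p−1}·q^{p+1}`, and
hence the estimate `q^{−p}·X` of `|E|` has relative error at least `θ` with
probability at most `2p·n^{p−1}/(θ²·|E|·q^{p−1})`. -/
theorem stmt19 {V : Type*} [Fintype V] [DecidableEq V] {Ω : Type*}
    [MeasurableSpace Ω] (μ : Measure Ω) [IsProbabilityMeasure μ]
    (p n : ℕ) (hp : 2 ≤ p) (hn : 0 < n) (hV : Fintype.card V ≤ p * n)
    (E : Finset (Finset V)) (hEne : E.Nonempty) (hE : ∀ e ∈ E, e.card = p)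
    (hdeg : ∀ v : V, (E.filter (fun e => v ∈ e)).card ≤ n ^ (p - 1))
    (ξ : V → Ω → ℝ) (hmeas : ∀ v, Measurable (ξ v))
    (hindep : iIndepFun ξ μ)
    (hval : ∀ v ω, ξ v ω = 0 ∨ ξ v ω = 1)
    (q : ℝ) (hqlb : 1 / ((p : ℝ) * n) ≤ q) (hq1 : q ≤ 1)
    (hq : ∀ v, μ {ω | ξ v ω = 1} = ENNReal.ofReal q) :
    ((∫ ω, (∑ e ∈ E, ∏ v ∈ e, ξ v ω) ^ 2 ∂μ)
        - (∫ ω, ∑ e ∈ E, ∏ v ∈ e, ξ v ω ∂μ) ^ 2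
      ≤ 2 * (p : ℝ) * E.card * (n : ℝ) ^ (p - 1) * q ^ (p + 1)) ∧
    ∀ θ : ℝ, 0 < θ →
      (μ {ω | θ * (E.card : ℝ) ≤
          |(∑ e ∈ E, ∏ v ∈ e, ξ v ω) / q ^ p - (E.card : ℝ)|}).toReal
        ≤ 2 * (p : ℝ) * (n : ℝ) ^ (p - 1) / (θ ^ 2 * E.card * q ^ (p - 1)) :=
  stmt19_general μ p n hp hn E hEne hE hdeg ξ hmeas hindep hval q hqlb hq1 hq
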